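/- Suppose in addition that |A| ≥ 2. Then for every deterministic learner as defined in the context, ε · (K − (1/|A|) Σ_{a∈A} E_{P_a}[N_a]) ≥ ε K (1/2 − ε √(K / (|A| B))). Equivalently, since under P_a the learner's expected regret (its expected total cost minus K times the optimal per-episode expected cost B) equals ε (K − E_{P_a}[N_a]), the expected regret averaged over a special action a chosen uniformly at random from A is at least ε K (1/2 − ε √(K / (|A| B))). -/

import Mathlib

open Finset

/-- The action played by a deterministic learner `f` in episode `k`, given the cost
sequence `c` (it depends only on the costs of episodes before `k`). -/
def learnerAct {K : ℕ} {A : Type*} (f : (k : Fin K) → (Fin (k : ℕ) → Bool) → A)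
    (c : Fin K → Bool) (k : Fin K) : A :=
  f k (fun i => c ⟨(i : ℕ), i.isLt.trans k.isLt⟩)

/-- The number of episodes in which the learner `f` plays action `a` on cost sequence `c`. -/
def learnerCount {K : ℕ} {A : Type*} [DecidableEq A]
    (f : (k : Fin K) → (Fin (k : ℕ) → Bool) → A) (a : A) (c : Fin K → Bool) : ℕ :=
  (univ.filter fun k => learnerAct f c k = a).card

/-- The probability of the cost sequence `c` under the model in which the cost of episode `k`
is Bernoulli with mean `B` if the special action `a` is played and mean `B + ε` otherwise. -/
noncomputable def probSpecial {K : ℕ} {A : Type*} [DecidableEq A]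
    (B ε : ℝ) (f : (k : Fin K) → (Fin (k : ℕ) → Bool) → A) (a : A)
    (c : Fin K → Bool) : ℝ :=
  ∏ k : Fin K,
    (if c k then (if learnerAct f c k = a then B else B + ε)
     else 1 - (if learnerAct f c k = a then B else B + ε))

/-!
Compare each `P_a` with the law `Q` under which every action has mean `B + ε`. As
`0 ≤ N_a ≤ K`, `E_{P_a}[N_a] ≤ E_Q[N_a] + K · TV(P_a, Q)`. Pinsker's inequality bounds the total
variation by `√(KL(Q ‖ P_a) / 2)`, and since the two laws differ only in the episodes where `a` is
played, the chain rule gives `KL(Q ‖ P_a) = kl(B + ε ‖ B) · E_Q[N_a] ≤ (2ε² / B) · E_Q[N_a]`.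
Finally `∑_a E_Q[N_a] = K`, so averaging over `a` and applying Jensen's inequality to `√` gives
`(1/|A|) ∑_a E_{P_a}[N_a] ≤ K / |A| + K ε √(K / (|A| B))`.
-/

open Real

noncomputable def discreteKL {ι : Type*} [Fintype ι] (Q P : ι → ℝ) : ℝ :=
  ∑ i, Q i * log (Q i / P i)

def bernoulliMass (θ : ℝ) (b : Bool) : ℝ := if b then θ else 1 - θ

theorem bernoulliMass_pos {θ : ℝ} (hθ : θ ∈ Set.Ioo 0 1) (b : Bool) : 0 < bernoulliMass θ b := by
  cases b
  · exact sub_pos.2 hθ.2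
  · exact hθ.1

theorem sum_bernoulliMass (θ : ℝ) : ∑ b, bernoulliMass θ b = 1 := by
  simp [bernoulliMass]

theorem discreteKL_bernoulliMass (q p : ℝ) :
    discreteKL (bernoulliMass q) (bernoulliMass p) =
      q * log (q / p) + (1 - q) * log ((1 - q) / (1 - p)) := by
  simp [discreteKL, bernoulliMass]

theorem discreteKL_self {ι : Type*} [Fintype ι] (Q : ι → ℝ) : discreteKL Q Q = 0 := by
  refine sum_eq_zero fun i _ => ?_
  rcases eq_or_ne (Q i) 0 with h | h <;> simp [h]

theorem log_sum_le {ι : Type*} (s : Finset ι) {a b : ι → ℝ} (ha : ∀ i ∈ s, 0 < a i)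
    (hb : ∀ i ∈ s, 0 < b i) :
    (∑ i ∈ s, a i) * log ((∑ i ∈ s, a i) / ∑ i ∈ s, b i) ≤ ∑ i ∈ s, a i * log (a i / b i) := by
  rcases s.eq_empty_or_nonempty with rfl | hs
  · simp
  have hb_sum : 0 < ∑ i ∈ s, b i := sum_pos hb hs
  have jensen := Real.convexOn_mul_log.map_sum_le (t := s) (w := fun i => b i / ∑ j ∈ s, b j)
    (p := fun i => a i / b i) (fun i hi => (div_pos (hb i hi) hb_sum).le)
    (by rw [← sum_div, div_self hb_sum.ne'])
    (fun i hi => (div_pos (ha i hi) (hb i hi)).le)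
  have hmean : ∑ i ∈ s, b i / (∑ j ∈ s, b j) * (a i / b i) = (∑ i ∈ s, a i) / ∑ i ∈ s, b i := by
    rw [sum_div]
    exact sum_congr rfl fun i hi => by field_simp [(hb i hi).ne']
  have hrhs : ∑ i ∈ s, b i / (∑ j ∈ s, b j) * (a i / b i * log (a i / b i)) =
      (∑ i ∈ s, a i * log (a i / b i)) / ∑ i ∈ s, b i := by
    rw [sum_div]
    exact sum_congr rfl fun i hi => by field_simp [(hb i hi).ne']
  simp only [smul_eq_mul, hmean, hrhs] at jensen
  rwa [div_mul_eq_mul_div, div_le_div_iff_of_pos_right hb_sum] at jensen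

theorem isMinOn_of_hasDerivAt_of_sub_mul_nonneg {g g' : ℝ → ℝ} {a b q : ℝ} (hq : q ∈ Set.Ioo a b)
    (hg : ∀ y ∈ Set.Ioo a b, HasDerivAt g (g' y) y)
    (hsign : ∀ y ∈ Set.Ioo a b, 0 ≤ (y - q) * g' y) :
    IsMinOn g (Set.Ioo a b) q := by
  have hcont : ContinuousOn g (Set.Ioo a b) := fun y hy => (hg y hy).continuousAt.continuousWithinAt
  have hmono : MonotoneOn g (Set.Ico q b) := by
    refine monotoneOn_of_hasDerivWithinAt_nonneg (f' := g') (convex_Ico q b)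
      (hcont.mono fun y hy => ⟨hq.1.trans_le hy.1, hy.2⟩) (fun y hy => ?_) (fun y hy => ?_)
    all_goals rw [interior_Ico] at hy
    · exact (hg y ⟨hq.1.trans hy.1, hy.2⟩).hasDerivWithinAt
    · exact nonneg_of_mul_nonneg_right (hsign y ⟨hq.1.trans hy.1, hy.2⟩) (sub_pos.2 hy.1)
  have hanti : AntitoneOn g (Set.Ioc a q) := by
    refine antitoneOn_of_hasDerivWithinAt_nonpos (f' := g') (convex_Ioc a q)
      (hcont.mono fun y hy => ⟨hy.1, hy.2.trans_lt hq.2⟩) (fun y hy => ?_) (fun y hy => ?_)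
    all_goals rw [interior_Ioc] at hy
    · exact (hg y ⟨hy.1, hy.2.trans hq.2⟩).hasDerivWithinAt
    · exact nonpos_of_mul_nonneg_right (hsign y ⟨hy.1, hy.2.trans hq.2⟩) (sub_neg.2 hy.2)
  intro x hx
  rcases le_total q x with h | h
  · exact hmono ⟨le_rfl, hq.2⟩ ⟨h, hx.2⟩ h
  · exact hanti ⟨hx.1, h⟩ ⟨hq.1, le_rfl⟩ h

theorem two_mul_sq_le_discreteKL_bernoulliMass {q x : ℝ} (hq : q ∈ Set.Ioo 0 1)
    (hx : x ∈ Set.Ioo 0 1) :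
    2 * (q - x) ^ 2 ≤ discreteKL (bernoulliMass q) (bernoulliMass x) := by
  set g : ℝ → ℝ := fun y => -(q * log y) - (1 - q) * log (1 - y) - 2 * (q - y) ^ 2
  have hderiv : ∀ y ∈ Set.Ioo (0 : ℝ) 1, HasDerivAt g ((y - q) * (1 / (y * (1 - y)) - 4)) y := by
    intro y hy
    have hy0 : y ≠ 0 := hy.1.ne'
    have hy1 : 1 - y ≠ 0 := sub_ne_zero.2 hy.2.ne'
    have h := (((hasDerivAt_log hy0).const_mul q).neg.sub
      (((hasDerivAt_log hy1).comp y ((hasDerivAt_id y).const_sub 1)).const_mul (1 - q))).sub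
      ((((hasDerivAt_id y).const_sub q).pow 2).const_mul 2)
    refine h.congr_deriv ?_
    simp only [id, Nat.cast_ofNat]
    field_simp
    ring
  -- `1 / (y (1 - y)) ≥ 4`, so the derivative has the sign of `y - q`
  have hmin := isMinOn_of_hasDerivAt_of_sub_mul_nonneg hq hderiv fun y hy => by
    have hy4 : 4 ≤ 1 / (y * (1 - y)) := by
      rw [le_div_iff₀ (mul_pos hy.1 (sub_pos.2 hy.2))]
      nlinarith [sq_nonneg (2 * y - 1)]
    nlinarith [mul_self_nonneg (y - q)]
  have hgx : g q ≤ g x := hmin hx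
  rw [discreteKL_bernoulliMass, log_div hq.1.ne' hx.1.ne',
    log_div (sub_pos.2 hq.2).ne' (sub_pos.2 hx.2).ne']
  simp only [g] at hgx
  nlinarith

theorem discreteKL_bernoulliMass_le {p q : ℝ} (hp : p ∈ Set.Ioo 0 1) (hq : q ∈ Set.Ioo 0 1) :
    discreteKL (bernoulliMass p) (bernoulliMass q) ≤ (p - q) ^ 2 / (q * (1 - q)) := by
  have hq0 : 0 < q := hq.1
  have hq1 : 0 < 1 - q := sub_pos.2 hq.2
  have h1 := log_le_sub_one_of_pos (div_pos hp.1 hq.1)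
  have h2 := log_le_sub_one_of_pos (div_pos (sub_pos.2 hp.2) hq1)
  have hchi : p * (p / q - 1) + (1 - p) * ((1 - p) / (1 - q) - 1) =
      (p - q) ^ 2 / (q * (1 - q)) := by
    field_simp
    ring
  rw [discreteKL_bernoulliMass, ← hchi]
  gcongr
  · exact hp.1.le
  · exact (sub_pos.2 hp.2).le

theorem discreteKL_bernoulliMass_sum_le {ι : Type*} [Fintype ι] [DecidableEq ι] {P Q : ι → ℝ}
    (hP : ∀ i, 0 < P i) (hQ : ∀ i, 0 < Q i) (hP1 : ∑ i, P i = 1) (hQ1 : ∑ i, Q i = 1)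
    (S : Finset ι) :
    discreteKL (bernoulliMass (∑ i ∈ S, Q i)) (bernoulliMass (∑ i ∈ S, P i)) ≤ discreteKL Q P := by
  have hSc : ∀ R : ι → ℝ, ∑ i, R i = 1 → 1 - ∑ i ∈ S, R i = ∑ i ∈ Sᶜ, R i := fun R hR => by
    rw [← hR, ← sum_add_sum_compl S R, add_sub_cancel_left]
  rw [discreteKL_bernoulliMass, hSc Q hQ1, hSc P hP1, discreteKL, ← sum_add_sum_compl S]
  exact add_le_add (log_sum_le S (fun i _ => hQ i) fun i _ => hP i)
    (log_sum_le Sᶜ (fun i _ => hQ i) fun i _ => hP i)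

/-- Pinsker's inequality; the left-hand side is the total variation distance. -/
theorem sum_max_sub_le_sqrt_discreteKL {ι : Type*} [Fintype ι] {P Q : ι → ℝ}
    (hP : ∀ i, 0 < P i) (hQ : ∀ i, 0 < Q i) (hP1 : ∑ i, P i = 1) (hQ1 : ∑ i, Q i = 1) :
    ∑ i, max (P i - Q i) 0 ≤ √(discreteKL Q P / 2) := by
  classical
  set S := univ.filter fun i => Q i < P i
  have hTV : ∑ i, max (P i - Q i) 0 = ∑ i ∈ S, P i - ∑ i ∈ S, Q i := by
    rw [← sum_sub_distrib, sum_filter]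
    exact sum_congr rfl fun i _ => by
      split_ifs with h
      · exact max_eq_left (sub_nonneg.2 h.le)
      · exact max_eq_right (sub_nonpos.2 (not_lt.1 h))
  obtain hS | hS := S.eq_empty_or_nonempty
  · rw [hTV, hS, sum_empty, sum_empty, sub_self]
    exact sqrt_nonneg _
  obtain hSc | hSc := Sᶜ.eq_empty_or_nonempty
  · rw [hTV, (compl_eq_empty_iff S).1 hSc, hP1, hQ1, sub_self]
    exact sqrt_nonneg _
  have hmass : ∀ R : ι → ℝ, (∀ i, 0 < R i) → ∑ i, R i = 1 → ∑ i ∈ S, R i ∈ Set.Ioo 0 1 :=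
    fun R hR hR1 => ⟨sum_pos (fun i _ => hR i) hS, by
      linarith [sum_add_sum_compl S R, sum_pos (fun i _ => hR i) hSc]⟩
  rw [hTV]
  apply le_sqrt_of_sq_le
  have := two_mul_sq_le_discreteKL_bernoulliMass (hmass Q hQ hQ1) (hmass P hP hP1)
  have := discreteKL_bernoulliMass_sum_le hP hQ hP1 hQ1 S
  nlinarith

theorem inv_card_mul_sum_sqrt_le {ι : Type*} [Fintype ι] {x : ι → ℝ} (hx : ∀ i, 0 ≤ x i) :
    (Fintype.card ι : ℝ)⁻¹ * ∑ i, √(x i) ≤ √((Fintype.card ι : ℝ)⁻¹ * ∑ i, x i) := by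
  cases isEmpty_or_nonempty ι
  · simp
  simpa [← mul_sum] using strictConcaveOn_sqrt.concaveOn.le_map_sum (t := univ)
    (w := fun _ => (Fintype.card ι : ℝ)⁻¹) (p := x) (fun _ _ => by positivity)
    (by simp) fun i _ => hx i

theorem sum_mul_le_sum_mul_add_mul_sum_max {ι : Type*} [Fintype ι] {P Q N : ι → ℝ} {M : ℝ}
    (hN0 : ∀ i, 0 ≤ N i) (hNM : ∀ i, N i ≤ M) :
    ∑ i, P i * N i ≤ ∑ i, Q i * N i + M * ∑ i, max (P i - Q i) 0 := by
  rw [mul_sum, ← sum_add_distrib]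
  refine sum_le_sum fun i _ => ?_
  have h1 : (P i - Q i) * N i ≤ max (P i - Q i) 0 * N i :=
    mul_le_mul_of_nonneg_right (le_max_left _ _) (hN0 i)
  have h2 : max (P i - Q i) 0 * N i ≤ max (P i - Q i) 0 * M :=
    mul_le_mul_of_nonneg_left (hNM i) (le_max_right _ _)
  linarith

section SeqBernoulli

variable {K : ℕ}

def history (c : Fin K → Bool) (k : Fin K) : Fin k → Bool :=
  fun i => c ⟨i, i.isLt.trans k.isLt⟩

noncomputable def seqBernoulli (θ : (k : Fin K) → (Fin k → Bool) → ℝ) (c : Fin K → Bool) : ℝ :=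
  ∏ k, bernoulliMass (θ k (history c k)) (c k)

theorem history_castSucc (c : Fin (K + 1) → Bool) (k : Fin K) :
    history c k.castSucc = history (Fin.init c) k :=
  rfl

theorem history_last (c : Fin (K + 1) → Bool) : history c (Fin.last K) = Fin.init c :=
  rfl

theorem seqBernoulli_succ (θ : (k : Fin (K + 1)) → (Fin k → Bool) → ℝ) (c : Fin (K + 1) → Bool) :
    seqBernoulli θ c = seqBernoulli (fun k => θ k.castSucc) (Fin.init c) *
      bernoulliMass (θ (Fin.last K) (Fin.init c)) (c (Fin.last K)) := by
  rw [seqBernoulli, Fin.prod_univ_castSucc]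
  rfl

theorem sum_seqBernoulli_mul (θ : (k : Fin (K + 1)) → (Fin k → Bool) → ℝ)
    (G : (Fin (K + 1) → Bool) → ℝ) :
    ∑ c, seqBernoulli θ c * G c = ∑ d, seqBernoulli (fun k => θ k.castSucc) d *
      ∑ b, bernoulliMass (θ (Fin.last K) d) b * G (Fin.snoc d b) := by
  rw [← (Fin.snocEquiv fun _ => Bool).sum_comp, Fintype.sum_prod_type_right]
  refine sum_congr rfl fun d _ => ?_
  rw [mul_sum]
  refine sum_congr rfl fun b _ => ?_
  change seqBernoulli θ (Fin.snoc d b) * G (Fin.snoc d b) = _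
  rw [seqBernoulli_succ, Fin.init_snoc, Fin.snoc_last, mul_assoc]

theorem sum_seqBernoulli_mul_comp_init (θ : (k : Fin (K + 1)) → (Fin k → Bool) → ℝ)
    (F : (Fin K → Bool) → ℝ) :
    ∑ c, seqBernoulli θ c * F (Fin.init c) =
      ∑ d, seqBernoulli (fun k => θ k.castSucc) d * F d := by
  simp only [sum_seqBernoulli_mul, Fin.init_snoc, ← sum_mul, sum_bernoulliMass, one_mul]

theorem sum_seqBernoulli (θ : (k : Fin K) → (Fin k → Bool) → ℝ) : ∑ c, seqBernoulli θ c = 1 := by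
  induction K with
  | zero => simp [seqBernoulli]
  | succ K ih => simpa [ih] using sum_seqBernoulli_mul_comp_init θ fun _ => 1

theorem seqBernoulli_pos {θ : (k : Fin K) → (Fin k → Bool) → ℝ}
    (hθ : ∀ k h, θ k h ∈ Set.Ioo 0 1) (c : Fin K → Bool) : 0 < seqBernoulli θ c :=
  prod_pos fun k _ => bernoulliMass_pos (hθ k _) _

theorem discreteKL_seqBernoulli {θ θ' : (k : Fin K) → (Fin k → Bool) → ℝ}
    (hθ : ∀ k h, θ k h ∈ Set.Ioo 0 1) (hθ' : ∀ k h, θ' k h ∈ Set.Ioo 0 1) :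
    discreteKL (seqBernoulli θ) (seqBernoulli θ') =
      ∑ k, ∑ c, seqBernoulli θ c *
        discreteKL (bernoulliMass (θ k (history c k))) (bernoulliMass (θ' k (history c k))) := by
  induction K with
  | zero => simp [discreteKL, seqBernoulli]
  | succ K ih =>
    rw [Fin.sum_univ_castSucc]
    simp only [history_castSucc, history_last]
    rw [sum_congr rfl fun k _ => sum_seqBernoulli_mul_comp_init θ fun d => discreteKL
        (bernoulliMass (θ k.castSucc (history d k))) (bernoulliMass (θ' k.castSucc (history d k))),
      sum_seqBernoulli_mul_comp_init θ fun d => discreteKL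
        (bernoulliMass (θ (Fin.last K) d)) (bernoulliMass (θ' (Fin.last K) d)),
      ← ih (fun k => hθ k.castSucc) (fun k => hθ' k.castSucc), discreteKL, discreteKL,
      sum_seqBernoulli_mul, ← sum_add_distrib]
    refine sum_congr rfl fun d _ => ?_
    rw [← mul_add]
    congr 1
    set Q := seqBernoulli (fun k => θ k.castSucc) d
    set P := seqBernoulli (fun k => θ' k.castSucc) d
    have hlog : ∀ b, log (seqBernoulli θ (Fin.snoc d b) / seqBernoulli θ' (Fin.snoc d b)) =
        log (Q / P) + log (bernoulliMass (θ (Fin.last K) d) b /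
          bernoulliMass (θ' (Fin.last K) d) b) := fun b => by
      rw [seqBernoulli_succ, seqBernoulli_succ, Fin.init_snoc, Fin.snoc_last, mul_div_mul_comm,
        log_mul (div_pos (seqBernoulli_pos (fun k => hθ k.castSucc) d)
          (seqBernoulli_pos (fun k => hθ' k.castSucc) d)).ne'
          (div_pos (bernoulliMass_pos (hθ _ _) b) (bernoulliMass_pos (hθ' _ _) b)).ne']
    simp only [hlog, mul_add, sum_add_distrib, ← sum_mul, sum_bernoulliMass, one_mul]
    rfl

end SeqBernoulli

section Learner

variable {K : ℕ} {A : Type*} [DecidableEq A] (f : (k : Fin K) → (Fin (k : ℕ) → Bool) → A)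

theorem learnerCount_le (a : A) (c : Fin K → Bool) : learnerCount f a c ≤ K :=
  (card_filter_le _ _).trans_eq (card_fin K)

theorem sum_learnerCount [Fintype A] (c : Fin K → Bool) : ∑ a, learnerCount f a c = K := by
  simpa [learnerCount] using
    (card_eq_sum_card_fiberwise (s := univ) fun k _ => mem_univ (learnerAct f c k)).symm

theorem sum_sum_mul_learnerCount [Fintype A] {P : (Fin K → Bool) → ℝ} (hP : ∑ c, P c = 1) :
    ∑ a, ∑ c, P c * learnerCount f a c = K := by
  rw [sum_comm]
  simp only [← mul_sum, ← Nat.cast_sum, sum_learnerCount, ← sum_mul, hP, one_mul]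

theorem probSpecial_eq_seqBernoulli (B ε : ℝ) (a : A) :
    probSpecial B ε f a = seqBernoulli fun k h => if f k h = a then B else B + ε :=
  rfl

theorem discreteKL_probSpecial {B ε : ℝ} (hB : B ∈ Set.Ioo 0 1) (hBε : B + ε ∈ Set.Ioo 0 1)
    (a : A) :
    discreteKL (seqBernoulli fun _ _ => B + ε) (probSpecial B ε f a) =
      discreteKL (bernoulliMass (B + ε)) (bernoulliMass B) *
        ∑ c, seqBernoulli (fun _ _ => B + ε) c * learnerCount f a c := by
  rw [probSpecial_eq_seqBernoulli,
    discreteKL_seqBernoulli (fun _ _ => hBε) fun k h => by split_ifs <;> assumption, sum_comm,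
    mul_sum]
  refine sum_congr rfl fun c _ => ?_
  simp only [learnerCount, card_filter, Nat.cast_sum, mul_sum]
  refine sum_congr rfl fun k _ => ?_
  change _ * discreteKL _ (bernoulliMass (if learnerAct f c k = a then B else B + ε)) = _
  split_ifs <;> simp [discreteKL_self]
  ring

theorem sum_probSpecial_mul_learnerCount_le {B ε : ℝ} (hB0 : 0 < B) (hB : B ≤ 1 / 2)
    (hε0 : 0 ≤ ε) (hBε : B + ε < 1) (a : A) :
    ∑ c, probSpecial B ε f a c * learnerCount f a c ≤
      ∑ c, seqBernoulli (fun _ _ => B + ε) c * learnerCount f a c +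
        K * (ε * √((∑ c, seqBernoulli (fun _ _ => B + ε) c * learnerCount f a c) / B)) := by
  set Q : (Fin K → Bool) → ℝ := seqBernoulli fun _ _ => B + ε
  set m := ∑ c, Q c * learnerCount f a c
  have hB1 : B ∈ Set.Ioo 0 1 := ⟨hB0, by linarith⟩
  have hp : B + ε ∈ Set.Ioo 0 1 := ⟨by linarith, hBε⟩
  have hm0 : 0 ≤ m := sum_nonneg fun c _ => mul_nonneg (seqBernoulli_pos (fun _ _ => hp) c).le
    (Nat.cast_nonneg _)
  have hkl : discreteKL Q (probSpecial B ε f a) ≤ 2 * ε ^ 2 / B * m := by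
    rw [discreteKL_probSpecial f hB1 hp]
    gcongr
    calc _ ≤ (B + ε - B) ^ 2 / (B * (1 - B)) := discreteKL_bernoulliMass_le hp hB1
      _ ≤ 2 * ε ^ 2 / B := by
        rw [add_sub_cancel_left, div_le_div_iff₀ (mul_pos hB0 (by linarith)) hB0]
        nlinarith [mul_nonneg (mul_nonneg (sq_nonneg ε) hB0.le) (by linarith : (0 : ℝ) ≤ 1 - 2 * B)]
  have hpinsker : ∑ c, max (probSpecial B ε f a c - Q c) 0 ≤
      √(discreteKL Q (probSpecial B ε f a) / 2) :=
    sum_max_sub_le_sqrt_discreteKL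
      (seqBernoulli_pos (θ := fun k h => if f k h = a then B else B + ε) fun k h => by
        split_ifs <;> assumption)
      (seqBernoulli_pos fun _ _ => hp)
      (sum_seqBernoulli fun k h => if f k h = a then B else B + ε) (sum_seqBernoulli _)
  calc ∑ c, probSpecial B ε f a c * learnerCount f a c
      ≤ m + K * ∑ c, max (probSpecial B ε f a c - Q c) 0 :=
        sum_mul_le_sum_mul_add_mul_sum_max (fun _ => Nat.cast_nonneg _)
          fun c => Nat.cast_le.2 (learnerCount_le f a c)
    _ ≤ m + K * √(discreteKL Q (probSpecial B ε f a) / 2) := by gcongr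
    _ ≤ m + K * (ε * √(m / B)) := by
        gcongr
        calc √(discreteKL Q (probSpecial B ε f a) / 2) ≤ √(ε ^ 2 * (m / B)) :=
              sqrt_le_sqrt (by linarith [hkl, show 2 * ε ^ 2 / B * m / 2 = ε ^ 2 * (m / B) by ring])
          _ = ε * √(m / B) := by rw [sqrt_mul (sq_nonneg ε), sqrt_sq hε0]

end Learner

theorem regret_lower_bound_general {K : ℕ}
    {A : Type*} [Fintype A] [DecidableEq A] (hA : 2 ≤ Fintype.card A)
    (B ε : ℝ) (hB0 : 0 < B) (hB : B ≤ 1 / 2) (hε0 : 0 < ε) (hε : ε < 1 / 8)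
    (f : (k : Fin K) → (Fin (k : ℕ) → Bool) → A) :
    ε * ((K : ℝ) -
        (1 / (Fintype.card A : ℝ)) *
          ∑ a : A, ∑ c : Fin K → Bool, probSpecial B ε f a c * (learnerCount f a c : ℝ)) ≥
      ε * (K : ℝ) *
        (1 / 2 - ε * Real.sqrt ((K : ℝ) / ((Fintype.card A : ℝ) * B))) := by
  have hn : (2 : ℝ) ≤ Fintype.card A := by exact_mod_cast hA
  set n : ℝ := (Fintype.card A : ℝ)
  set m : A → ℝ := fun a => ∑ c, seqBernoulli (fun _ _ => B + ε) c * learnerCount f a c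
  have hm_sum : ∑ a, m a = K := sum_sum_mul_learnerCount f (sum_seqBernoulli _)
  have hm0 : ∀ a, 0 ≤ m a := fun a => sum_nonneg fun c _ => mul_nonneg
    (seqBernoulli_pos (fun _ _ => ⟨by linarith, by linarith⟩) c).le (Nat.cast_nonneg _)
  have hjensen : 1 / n * ∑ a, √(m a / B) ≤ √(K / (n * B)) := by
    have h := inv_card_mul_sum_sqrt_le fun a => div_nonneg (hm0 a) hB0.le
    rw [← sum_div, hm_sum] at h
    rw [one_div]
    convert h using 2
    ring
  have havg : 1 / n * ∑ a, ∑ c, probSpecial B ε f a c * learnerCount f a c ≤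
      K / 2 + K * ε * √(K / (n * B)) := by
    calc 1 / n * ∑ a, ∑ c, probSpecial B ε f a c * learnerCount f a c
        ≤ 1 / n * ∑ a, (m a + K * (ε * √(m a / B))) := by
          gcongr with a
          exact sum_probSpecial_mul_learnerCount_le f hB0 hB hε0.le (by linarith) a
      _ = K / n + K * ε * (1 / n * ∑ a, √(m a / B)) := by
          rw [sum_add_distrib, hm_sum, ← mul_sum, ← mul_sum]
          ring
      _ ≤ K / 2 + K * ε * √(K / (n * B)) := by
          gcongr
  nlinarith [mul_le_mul_of_nonneg_left havg hε0.le]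

/-- Lower bound on the expected regret of any deterministic learner, averaged over a
uniformly random special action:
`ε (K − (1/|A|) ∑_a E_{P_a}[N_a]) ≥ ε K (1/2 − ε √(K/(|A| B)))`. -/
theorem regret_lower_bound {K : ℕ} (hK : 1 ≤ K)
    {A : Type*} [Fintype A] [DecidableEq A] (hA : 2 ≤ Fintype.card A)
    (B ε : ℝ) (hB0 : 0 < B) (hB : B ≤ 1 / 2) (hε0 : 0 < ε) (hε : ε < 1 / 8)
    (f : (k : Fin K) → (Fin (k : ℕ) → Bool) → A) :
    ε * ((K : ℝ) -
        (1 / (Fintype.card A : ℝ)) *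
          ∑ a : A, ∑ c : Fin K → Bool, probSpecial B ε f a c * (learnerCount f a c : ℝ)) ≥
      ε * (K : ℝ) *
        (1 / 2 - ε * Real.sqrt ((K : ℝ) / ((Fintype.card A : ℝ) * B))) :=
  regret_lower_bound_general hA B ε hB0 hB hε0 hε f
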